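/- arXiv:1009.0197 — 3 statements merged into one kernel-verified Lean document; each statement's English description precedes it below -/
import Mathlib

section
/- Discrete strong minimum principle for the five-point Laplacian: let S ⊂ ℤ² be a finite set that is 4-connected (any two points of S are joined by a path within S whose consecutive points are 4-neighbors), and suppose every 4-neighbor of every point of S lies in S ∪ ∂S. Let T : ℤ² → ℝ satisfy Δ_h T(p) = 0 for all p ∈ S. If T attains the value m = min_{S ∪ ∂S} T at some point of S, then T is constant equal to m on all of S ∪ ∂S. -/
/-- `q` is one of the four 4-neighbors of `p` in `ℤ²`. -/
def IsNbr (p q : ℤ × ℤ) : Prop :=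
  q = p + (1, 0) ∨ q = p - (1, 0) ∨ q = p + (0, 1) ∨ q = p - (0, 1)

/-- Five-point discrete Laplacian on `ℤ²`. -/
def discLap (T : ℤ × ℤ → ℝ) (p : ℤ × ℤ) : ℝ :=
  T (p + (1, 0)) + T (p - (1, 0)) + T (p + (0, 1)) + T (p - (0, 1)) - 4 * T p

/-- Discrete boundary of a finite set `S ⊂ ℤ²`: points outside `S` having a
4-neighbor in `S`. -/
def discBdry (S : Finset (ℤ × ℤ)) : Set (ℤ × ℤ) :=
  {p | p ∉ S ∧ ∃ q ∈ S, IsNbr p q}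

/-- `S` is 4-connected: any two of its points are joined by a path within `S`
whose consecutive points are 4-neighbors. -/
def Connected4 (S : Finset (ℤ × ℤ)) : Prop :=
  ∀ a ∈ S, ∀ b ∈ S,
    Relation.ReflTransGen (fun p q => p ∈ S ∧ q ∈ S ∧ IsNbr p q) a b

/-- Discrete strong minimum principle for the five-point Laplacian: if `S` is a
finite 4-connected set, every 4-neighbor of every point of `S` lies in
`S ∪ ∂S`, `T` is discrete harmonic on `S`, and `T` attains the minimum `m` of
`T` over `S ∪ ∂S` at some point of `S`, then `T ≡ m` on all of `S ∪ ∂S`. -/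
theorem discrete_strong_min_principle
    (S : Finset (ℤ × ℤ)) (hconn : Connected4 S)
    (hcl : ∀ p ∈ S, ∀ q : ℤ × ℤ, IsNbr p q → q ∈ S ∨ q ∈ discBdry S)
    (T : ℤ × ℤ → ℝ) (hharm : ∀ p ∈ S, discLap T p = 0)
    (m : ℝ) (hmin : ∀ q : ℤ × ℤ, (q ∈ S ∨ q ∈ discBdry S) → m ≤ T q)
    (hatt : ∃ p ∈ S, T p = m) :
    ∀ q : ℤ × ℤ, (q ∈ S ∨ q ∈ discBdry S) → T q = m := by

  -- symmetry of IsNbr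
  have hsymm : ∀ p q : ℤ × ℤ, IsNbr p q → IsNbr q p := by
    intro p q h
    rcases h with h | h | h | h
    · right; left; simp [IsNbr, h]
    · left; simp [IsNbr, h]
    · right; right; right; simp [IsNbr, h]
    · right; right; left; simp [IsNbr, h]
  -- key lemma: min propagates to neighbors
  have key : ∀ p ∈ S, T p = m → ∀ q : ℤ × ℤ, IsNbr p q → T q = m := by
    intro p hp hpm q hq
    have h1 := hmin _ (hcl p hp _ (Or.inl rfl))
    have h2 := hmin _ (hcl p hp _ (Or.inr (Or.inl rfl)))
    have h3 := hmin _ (hcl p hp _ (Or.inr (Or.inr (Or.inl rfl))))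
    have h4 := hmin _ (hcl p hp _ (Or.inr (Or.inr (Or.inr rfl))))
    have hh := hharm p hp
    unfold discLap at hh
    rw [hpm] at hh
    rcases hq with h | h | h | h <;> subst h <;> linarith
  obtain ⟨p0, hp0, hp0m⟩ := hatt
  have hS : ∀ a ∈ S, T a = m := by
    intro a ha
    have := hconn p0 hp0 a ha
    induction this with
    | refl => exact hp0m
    | tail _ h ih => exact key _ h.1 (ih h.1) _ h.2.2
  intro q hq
  rcases hq with hq | hq
  · exact hS q hq
  · obtain ⟨_, s, hs, hns⟩ := hq
    exact key s hs (hS s hs) q (hsymm q s hns)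
end

section
/- Validity of harmonic interpolation with a single stop curve (strict bounds): let Ω_h ⊂ ℤ² be finite, Γ_h ⊆ Ω_h nonempty, set S = Ω_h \ Γ_h, and assume S is nonempty and 4-connected, every 4-neighbor of every point of S lies in S ∪ ∂Ω_h ∪ Γ_h, and both ∂Ω_h and Γ_h contain a 4-neighbor of some point of S. Let t > 0 and let T satisfy Δ_h T = 0 on S (five-point Laplacian), T = 0 on ∂Ω_h, and T = t on Γ_h. Then 0 < T(p) < t for every p ∈ S. -/
/-!
Strong maximum principle for the five-point Laplacian: at a point where `Δ_h T = 0`, `T` is the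
mean of its four neighbours, so if it is maximal there, all four neighbours share its value.
Along 4-paths in `S` a maximum of `T` over `S` that is at least every value just outside `S`
therefore spreads to all of `S` and then to each neighbour of `S`, contradicting a neighbour where
`T` is strictly smaller. Applied to `T` (against `∂Ω_h`) and to `-T` (against `Γ_h`) this gives
both strict bounds.
-/

def DiscHarmonicOn (T : ℤ × ℤ → ℝ) (S : Finset (ℤ × ℤ)) : Prop :=
  ∀ p ∈ S, discLap T p = 0

theorem discLap_neg (T : ℤ × ℤ → ℝ) (p : ℤ × ℤ) : discLap (-T) p = -discLap T p := by
  simp only [discLap, Pi.neg_apply]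
  ring

theorem DiscHarmonicOn.neg {T : ℤ × ℤ → ℝ} {S : Finset (ℤ × ℤ)} (hT : DiscHarmonicOn T S) :
    DiscHarmonicOn (-T) S := fun p hp => by
  rw [discLap_neg, hT p hp, neg_zero]

theorem apply_eq_of_discLap_eq_zero {T : ℤ × ℤ → ℝ} {p : ℤ × ℤ} {c : ℝ}
    (hp : discLap T p = 0) (hle : ∀ q, IsNbr p q → T q ≤ c) (hpc : T p = c)
    {q : ℤ × ℤ} (hq : IsNbr p q) : T q = c := by
  have h₁ := hle _ (Or.inl rfl)
  have h₂ := hle _ (Or.inr (Or.inl rfl))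
  have h₃ := hle _ (Or.inr (Or.inr (Or.inl rfl)))
  have h₄ := hle _ (Or.inr (Or.inr (Or.inr rfl)))
  unfold discLap at hp
  rcases hq with rfl | rfl | rfl | rfl <;> linarith

namespace Connected4

variable {S : Finset (ℤ × ℤ)} {T : ℤ × ℤ → ℝ} {c : ℝ}

theorem eq_of_discHarmonicOn (hS : Connected4 S) (hT : DiscHarmonicOn T S)
    (hle : ∀ p ∈ S, ∀ q, IsNbr p q → T q ≤ c) {p₀ : ℤ × ℤ} (hp₀ : p₀ ∈ S) (hc : T p₀ = c) :
    ∀ p ∈ S, T p = c := by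
  intro p hp
  induction hS p₀ hp₀ p hp with
  | refl => exact hc
  | tail _ hxy ih =>
    obtain ⟨hx, -, hxy⟩ := hxy
    exact apply_eq_of_discLap_eq_zero (hT _ hx) (hle _ hx) (ih hx) hxy

theorem apply_lt_of_discHarmonicOn (hS : Connected4 S) (hT : DiscHarmonicOn T S)
    (hle : ∀ p ∈ S, ∀ q, IsNbr p q → q ∉ S → T q ≤ c)
    (hlt : ∃ p ∈ S, ∃ q, IsNbr p q ∧ q ∉ S ∧ T q < c) :
    ∀ p ∈ S, T p < c := by
  obtain ⟨a, ha, q, haq, -, hqc⟩ := hlt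
  obtain ⟨p₀, hp₀, hmax⟩ := S.exists_max_image T ⟨a, ha⟩
  suffices T p₀ < c from fun p hp => (hmax p hp).trans_lt this
  by_contra! hcp
  have hle_max : ∀ p ∈ S, ∀ q, IsNbr p q → T q ≤ T p₀ := by
    intro p hp q hq
    by_cases hqS : q ∈ S
    · exact hmax q hqS
    · exact (hle p hp q hq hqS).trans hcp
  have hconst := hS.eq_of_discHarmonicOn hT hle_max hp₀ rfl
  have hq_max := apply_eq_of_discLap_eq_zero (hT a ha) (hle_max a ha) (hconst a ha) haq
  linarith

theorem lt_apply_of_discHarmonicOn (hS : Connected4 S) (hT : DiscHarmonicOn T S)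
    (hle : ∀ p ∈ S, ∀ q, IsNbr p q → q ∉ S → c ≤ T q)
    (hlt : ∃ p ∈ S, ∃ q, IsNbr p q ∧ q ∉ S ∧ c < T q) :
    ∀ p ∈ S, c < T p := by
  have hneg := hS.apply_lt_of_discHarmonicOn (c := -c) hT.neg
    (fun p hp q hq hqS => neg_le_neg (hle p hp q hq hqS))
    (by
      obtain ⟨p, hp, q, hq, hqS, hcq⟩ := hlt
      exact ⟨p, hp, q, hq, hqS, neg_lt_neg hcq⟩)
  exact fun p hp => neg_lt_neg_iff.1 (hneg p hp)

end Connected4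

theorem harmonic_interpolation_single_curve_strict_bounds_general
    (Ωh Γh : Finset (ℤ × ℤ)) (hconn : Connected4 (Ωh \ Γh))
    (hcl : ∀ p ∈ Ωh \ Γh, ∀ q : ℤ × ℤ, IsNbr p q →
      q ∈ Ωh \ Γh ∨ q ∈ discBdry Ωh ∨ q ∈ Γh)
    (hadj_bd : ∃ p ∈ Ωh \ Γh, ∃ q ∈ discBdry Ωh, IsNbr p q)
    (hadj_Γ : ∃ p ∈ Ωh \ Γh, ∃ q ∈ Γh, IsNbr p q)
    (t : ℝ) (ht : 0 < t)
    (T : ℤ × ℤ → ℝ)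
    (hharm : ∀ p ∈ Ωh \ Γh, discLap T p = 0)
    (hbd : ∀ q ∈ discBdry Ωh, T q = 0)
    (hΓval : ∀ q ∈ Γh, T q = t) :
    ∀ p ∈ Ωh \ Γh, 0 < T p ∧ T p < t := by
  have hout (p) (hp : p ∈ Ωh \ Γh) (q) (hq : IsNbr p q) (hqS : q ∉ Ωh \ Γh) :
      T q = 0 ∨ T q = t :=
    ((hcl p hp q hq).resolve_left hqS).imp (hbd q) (hΓval q)
  have hbd_out (q) (hq : q ∈ discBdry Ωh) : q ∉ Ωh \ Γh :=
    fun hqS => hq.1 (Finset.mem_sdiff.1 hqS).1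
  have hΓ_out (q) (hq : q ∈ Γh) : q ∉ Ωh \ Γh := fun hqS => (Finset.mem_sdiff.1 hqS).2 hq
  have hpos := hconn.lt_apply_of_discHarmonicOn (c := 0) hharm
    (fun p hp q hq hqS => by rcases hout p hp q hq hqS with h | h <;> linarith)
    (by
      obtain ⟨p, hp, q, hq, hpq⟩ := hadj_Γ
      exact ⟨p, hp, q, hpq, hΓ_out q hq, (hΓval q hq).symm ▸ ht⟩)
  have hlt := hconn.apply_lt_of_discHarmonicOn (c := t) hharm
    (fun p hp q hq hqS => by rcases hout p hp q hq hqS with h | h <;> linarith)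
    (by
      obtain ⟨p, hp, q, hq, hpq⟩ := hadj_bd
      exact ⟨p, hp, q, hpq, hbd_out q hq, (hbd q hq).symm ▸ ht⟩)
  exact fun p hp => ⟨hpos p hp, hlt p hp⟩

/-- Validity of harmonic interpolation with a single stop curve (strict
bounds): with a single stop curve `Γ_h ⊆ Ω_h`, `S = Ω_h \ Γ_h` nonempty and
4-connected, all 4-neighbors of `S` in `S ∪ ∂Ω_h ∪ Γ_h`, both `∂Ω_h` and `Γ_h`
containing a 4-neighbor of some point of `S`, and `T` discrete harmonic on `S`
with `T = 0` on `∂Ω_h` and `T = t > 0` on `Γ_h`, one has `0 < T < t` on `S`. -/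
theorem harmonic_interpolation_single_curve_strict_bounds
    (Ωh Γh : Finset (ℤ × ℤ)) (hΓΩ : Γh ⊆ Ωh) (hΓne : Γh.Nonempty)
    (hSne : (Ωh \ Γh).Nonempty) (hconn : Connected4 (Ωh \ Γh))
    (hcl : ∀ p ∈ Ωh \ Γh, ∀ q : ℤ × ℤ, IsNbr p q →
      q ∈ Ωh \ Γh ∨ q ∈ discBdry Ωh ∨ q ∈ Γh)
    (hadj_bd : ∃ p ∈ Ωh \ Γh, ∃ q ∈ discBdry Ωh, IsNbr p q)
    (hadj_Γ : ∃ p ∈ Ωh \ Γh, ∃ q ∈ Γh, IsNbr p q)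
    (t : ℝ) (ht : 0 < t)
    (T : ℤ × ℤ → ℝ)
    (hharm : ∀ p ∈ Ωh \ Γh, discLap T p = 0)
    (hbd : ∀ q ∈ discBdry Ωh, T q = 0)
    (hΓval : ∀ q ∈ Γh, T q = t) :
    ∀ p ∈ Ωh \ Γh, 0 < T p ∧ T p < t :=
  harmonic_interpolation_single_curve_strict_bounds_general Ωh Γh hconn hcl hadj_bd hadj_Γ t ht T
    hharm hbd hΓval
end

section
/- Guidance limit of the coherence transport kernel, generic case: let g, N ∈ ℝ² be unit vectors with ⟨g, N⟩ > 0, and let g⊥ denote the rotation of g by 90°. For μ > 0 define the vector v_μ = ∫_{D} (1/|η|) · μ · exp(−(μ²/2) ⟨g⊥, η⟩²) · η dη, where D = {η ∈ ℝ² : |η| ≤ 1, ⟨η, N⟩ ≥ 0} is the closed half-disk determined by N. Then v_μ converges as μ → ∞, with lim_{μ→∞} v_μ = √(2π) · g; in particular the normalized transport direction v_μ/|v_μ| converges to the guidance vector g. -/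
open MeasureTheory Filter Real

/-- Rotation of a vector of `ℝ²` by 90°. -/
noncomputable def perp (v : EuclideanSpace ℝ (Fin 2)) : EuclideanSpace ℝ (Fin 2) :=
  WithLp.toLp 2 ![-(v 1), v 0]

/-- The closed unit half-disk `{η : |η| ≤ 1, ⟨η, N⟩ ≥ 0}` determined by `N`. -/
def halfDisk (N : EuclideanSpace ℝ (Fin 2)) : Set (EuclideanSpace ℝ (Fin 2)) :=
  {η | ‖η‖ ≤ 1 ∧ 0 ≤ (inner ℝ η N : ℝ)}

/-- The (unnormalized) average transport direction of coherence transport: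
`v_μ = ∫_D (1/|η|) μ exp(−(μ²/2)⟨g⊥, η⟩²) η dη` over the half-disk `D`
determined by the fill-front normal `N`. -/
noncomputable def transportVec (g N : EuclideanSpace ℝ (Fin 2)) (μ : ℝ) :
    EuclideanSpace ℝ (Fin 2) :=
  ∫ η in halfDisk N,
    ((1 / ‖η‖) * μ * Real.exp (-(μ ^ 2 / 2) * (inner ℝ (perp g) η : ℝ) ^ 2)) • η

/-! In the coordinates `η = t g + s g⊥` the weight of `transportVec` is `μ e^{-μ²s²/2} / |η|`,
so the substitution `s = u / μ` turns `v_μ` into `∫ e^{-u²/2} 1_D(η) η / |η| dt du` with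
`η = t g + (u / μ) g⊥ → t g`. Because `⟨g, N⟩ > 0`, the point `t g` lies in the interior of the
half-disk `D` for `0 < t < 1` and outside `D` for `t < 0` or `t > 1`, so dominated convergence
(with majorant `1_{|t| ≤ 1} e^{-u²/2}`) gives the limit `∫₀¹ ∫ e^{-u²/2} g du dt = √(2π) g`.
The normalized direction converges since `η ↦ η / |η|` is continuous away from `0`. -/

open Topology

theorem ContinuousAt.indicator_of_notMem_frontier {X Y : Type*} [TopologicalSpace X]
    [TopologicalSpace Y] [Zero Y] {f : X → Y} {s : Set X} {x : X} (hf : ContinuousAt f x)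
    (hx : x ∉ frontier s) : ContinuousAt (s.indicator f) x := by
  rw [← Set.mem_compl_iff, compl_frontier_eq_union_interior] at hx
  rcases hx with hx | hx
  · exact hf.congr (Filter.eventuallyEq_of_mem (mem_interior_iff_mem_nhds.1 hx)
      fun y hy => (Set.indicator_of_mem hy f).symm)
  · exact continuousAt_const.congr (Filter.eventuallyEq_of_mem (mem_interior_iff_mem_nhds.1 hx)
      fun y hy => (Set.indicator_of_notMem hy f).symm)

theorem continuousAt_inv_norm_smul {E : Type*} [NormedAddCommGroup E] [NormedSpace ℝ E] {x : E}
    (hx : x ≠ 0) : ContinuousAt (fun y : E => ‖y‖⁻¹ • y) x :=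
  (continuous_norm.continuousAt.inv₀ (norm_ne_zero_iff.2 hx)).smul continuousAt_id

theorem integral_comp_mul_snd {F : Type*} [NormedAddCommGroup F] [NormedSpace ℝ F]
    (f : ℝ × ℝ → F) {c : ℝ} (hc : c ≠ 0) :
    ∫ p : ℝ × ℝ, f (p.1, c * p.2) = |c⁻¹| • ∫ p, f p := by
  let e : ℝ × ℝ ≃ᵐ ℝ × ℝ :=
    (MeasurableEquiv.refl ℝ).prodCongr (Homeomorph.mulLeft₀ c hc).toMeasurableEquiv
  have hmap : Measure.map e volume = ENNReal.ofReal |c⁻¹| • volume := by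
    rw [show ⇑e = Prod.map id (c * ·) from rfl, Measure.volume_eq_prod,
      ← Measure.map_prod_map _ _ measurable_id (measurable_const_mul c), Measure.map_id,
      Real.map_volume_mul_left hc, Measure.prod_smul_right]
  change ∫ p, f (e p) = _
  rw [← integral_map_equiv e, hmap, integral_smul_measure, ENNReal.toReal_ofReal (abs_nonneg _)]

theorem integral_eq_integral_orthonormal_coords {E F : Type*} [NormedAddCommGroup E]
    [InnerProductSpace ℝ E] [FiniteDimensional ℝ E] [MeasurableSpace E] [BorelSpace E]
    [NormedAddCommGroup F] [NormedSpace ℝ F] (hE : Module.finrank ℝ E = 2) {v : Fin 2 → E}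
    (hv : Orthonormal ℝ v) (f : E → F) :
    ∫ x, f x = ∫ p : ℝ × ℝ, f (p.1 • v 0 + p.2 • v 1) := by
  let b : OrthonormalBasis (Fin 2) ℝ E := .mk hv
    (hv.linearIndependent.span_eq_top_of_card_eq_finrank (by simp [hE])).ge
  let Ψ : ℝ × ℝ ≃ᵐ E := MeasurableEquiv.finTwoArrow.symm.trans
    ((MeasurableEquiv.toLp 2 (Fin 2 → ℝ)).trans b.repr.symm.toHomeomorph.toMeasurableEquiv)
  have hΨ : MeasurePreserving Ψ volume volume :=
    (b.measurePreserving_repr_symm.comp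
      (EuclideanSpace.volume_preserving_symm_measurableEquiv_toLp (Fin 2)).symm).comp
      (volume_preserving_finTwoArrow ℝ).symm
  have hΨp (p : ℝ × ℝ) : Ψ p = p.1 • v 0 + p.2 • v 1 := by
    simp [Ψ, b, ← OrthonormalBasis.sum_repr_symm, Fin.sum_univ_two]
  simp_rw [← hΨp]
  exact (hΨ.integral_comp' f).symm

theorem integrable_indicator_Icc_mul_gaussian :
    Integrable fun p : ℝ × ℝ =>
      (Set.Icc (-1) 1).indicator 1 p.1 * Real.exp (-(1 / 2) * p.2 ^ 2) := by
  rw [Measure.volume_eq_prod]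
  exact Integrable.mul_prod
    ((integrable_indicator_iff measurableSet_Icc).2 (integrableOn_const measure_Icc_lt_top.ne))
    (integrable_exp_neg_mul_sq (by norm_num))

theorem integral_indicator_Ioc_mul_gaussian_smul {F : Type*} [NormedAddCommGroup F]
    [NormedSpace ℝ F] [CompleteSpace F] (v : F) :
    ∫ p : ℝ × ℝ, ((Set.Ioc 0 1).indicator 1 p.1 * Real.exp (-(1 / 2) * p.2 ^ 2)) • v =
      √(2 * π) • v := by
  rw [integral_smul_const, Measure.volume_eq_prod,
    integral_prod_mul (f := (Set.Ioc (0 : ℝ) 1).indicator 1)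
      (g := fun u => Real.exp (-(1 / 2) * u ^ 2)),
    integral_indicator_one measurableSet_Ioc, integral_gaussian]
  norm_num [div_eq_mul_inv, mul_comm]

theorem inner_perp_self (v : EuclideanSpace ℝ (Fin 2)) : inner ℝ (perp v) v = 0 := by
  simp [perp, PiLp.inner_apply, Fin.sum_univ_two]; ring

theorem inner_self_perp (v : EuclideanSpace ℝ (Fin 2)) : inner ℝ v (perp v) = 0 := by
  rw [real_inner_comm, inner_perp_self]

theorem norm_perp (v : EuclideanSpace ℝ (Fin 2)) : ‖perp v‖ = ‖v‖ := by
  simp [perp, EuclideanSpace.norm_eq, Fin.sum_univ_two, add_comm]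

theorem continuous_inner_const (N : EuclideanSpace ℝ (Fin 2)) :
    Continuous fun η : EuclideanSpace ℝ (Fin 2) => inner ℝ η N := by
  fun_prop

theorem isClosed_halfDisk (N : EuclideanSpace ℝ (Fin 2)) : IsClosed (halfDisk N) :=
  (isClosed_le continuous_norm continuous_const).inter
    (isClosed_le continuous_const (continuous_inner_const N))

theorem frontier_halfDisk_subset (N : EuclideanSpace ℝ (Fin 2)) :
    frontier (halfDisk N) ⊆ {η | ‖η‖ = 1 ∨ inner ℝ η N = 0} := by
  intro η hη
  rcases frontier_inter_subset _ _ hη with ⟨h, -⟩ | ⟨-, h⟩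
  · exact Or.inl (frontier_le_subset_eq continuous_norm continuous_const h)
  · exact Or.inr (frontier_le_subset_eq continuous_const (continuous_inner_const N) h).symm

noncomputable def rescaledIntegrand (g N : EuclideanSpace ℝ (Fin 2)) (μ : ℝ) (p : ℝ × ℝ) :
    EuclideanSpace ℝ (Fin 2) :=
  Real.exp (-(1 / 2) * p.2 ^ 2) •
    (halfDisk N).indicator (fun η => ‖η‖⁻¹ • η) (p.1 • g + (μ⁻¹ * p.2) • perp g)

theorem aestronglyMeasurable_rescaledIntegrand (g N : EuclideanSpace ℝ (Fin 2)) (μ : ℝ) :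
    AEStronglyMeasurable (rescaledIntegrand g N μ) := by
  have hφ : Measurable ((halfDisk N).indicator fun η => ‖η‖⁻¹ • η) :=
    (by fun_prop : Measurable fun η : EuclideanSpace ℝ (Fin 2) => ‖η‖⁻¹ • η).indicator
      (isClosed_halfDisk N).measurableSet
  exact ((by fun_prop : Measurable fun p : ℝ × ℝ => Real.exp (-(1 / 2) * p.2 ^ 2)).smul
    (hφ.comp (by fun_prop))).aestronglyMeasurable

section UnitGuidance

variable {g N : EuclideanSpace ℝ (Fin 2)}

theorem orthonormal_perp (hg : ‖g‖ = 1) : Orthonormal ℝ ![g, perp g] := by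
  rw [orthonormal_iff_ite]
  intro i j
  fin_cases i <;> fin_cases j <;> simp [norm_perp, hg, inner_perp_self, inner_self_perp]

theorem inner_smul_add_smul_perp (hg : ‖g‖ = 1) (t s : ℝ) :
    inner ℝ g (t • g + s • perp g) = t := by
  simp [inner_add_right, real_inner_smul_right, hg, inner_self_perp]

theorem inner_perp_smul_add_smul_perp (hg : ‖g‖ = 1) (t s : ℝ) :
    inner ℝ (perp g) (t • g + s • perp g) = s := by
  simp [inner_add_right, real_inner_smul_right, norm_perp, hg, inner_perp_self]

theorem smul_mem_halfDisk_iff (hg : ‖g‖ = 1) (hgN : 0 < inner ℝ g N) (t : ℝ) :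
    t • g ∈ halfDisk N ↔ t ∈ Set.Icc 0 1 := by
  simp only [halfDisk, Set.mem_ofPred_eq, norm_smul, hg, mul_one, Real.norm_eq_abs,
    real_inner_smul_left, mul_nonneg_iff_of_pos_right hgN, abs_le, Set.mem_Icc]
  constructor
  · rintro ⟨⟨-, h1⟩, h0⟩; exact ⟨h0, h1⟩
  · rintro ⟨h0, h1⟩; exact ⟨⟨by linarith, h1⟩, h0⟩

theorem indicator_halfDisk_smul (hg : ‖g‖ = 1) (hgN : 0 < inner ℝ g N) (t : ℝ) :
    (halfDisk N).indicator (fun η => ‖η‖⁻¹ • η) (t • g) =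
      (Set.Ioc (0 : ℝ) 1).indicator (1 : ℝ → ℝ) t • g := by
  by_cases ht : t ∈ Set.Icc 0 1
  · rw [Set.indicator_of_mem ((smul_mem_halfDisk_iff hg hgN t).2 ht), norm_smul, hg, mul_one,
      smul_smul]
    rcases ht.1.eq_or_lt with rfl | ht₀
    · simp
    · rw [Set.indicator_of_mem (show t ∈ Set.Ioc 0 1 from ⟨ht₀, ht.2⟩),
        Real.norm_of_nonneg ht.1, inv_mul_cancel₀ ht₀.ne', Pi.one_apply]
  · rw [Set.indicator_of_notMem (mt (smul_mem_halfDisk_iff hg hgN t).1 ht),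
      Set.indicator_of_notMem (fun h => ht (Set.Ioc_subset_Icc_self h)), zero_smul]

theorem smul_notMem_frontier_halfDisk (hg : ‖g‖ = 1) (hgN : 0 < inner ℝ g N) {t : ℝ}
    (ht₀ : t ≠ 0) (ht₁ : t ≠ 1) : t • g ∉ frontier (halfDisk N) := by
  intro h
  obtain ⟨ht, -⟩ := (smul_mem_halfDisk_iff hg hgN t).1 ((isClosed_halfDisk N).frontier_subset h)
  rcases frontier_halfDisk_subset N h with hnorm | hinner
  · rw [norm_smul, hg, mul_one, Real.norm_of_nonneg ht] at hnorm
    exact ht₁ hnorm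
  · rw [real_inner_smul_left] at hinner
    exact ht₀ ((mul_eq_zero.1 hinner).resolve_right hgN.ne')

theorem transportVec_eq_integral_rescaledIntegrand (hg : ‖g‖ = 1) {μ : ℝ} (hμ : 0 < μ) :
    transportVec g N μ = ∫ p, rescaledIntegrand g N μ p := by
  set F := (halfDisk N).indicator fun η =>
    ((1 / ‖η‖) * μ * Real.exp (-(μ ^ 2 / 2) * inner ℝ (perp g) η ^ 2)) • η
  have hscale := integral_comp_mul_snd (fun p : ℝ × ℝ => F (p.1 • g + p.2 • perp g))
    (inv_ne_zero hμ.ne')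
  rw [inv_inv, abs_of_pos hμ] at hscale
  rw [transportVec, ← integral_indicator (isClosed_halfDisk N).measurableSet,
    integral_eq_integral_orthonormal_coords (by simp) (orthonormal_perp hg)]
  simp only [Matrix.cons_val_zero, Matrix.cons_val_one]
  rw [eq_inv_smul_iff₀ hμ.ne' |>.2 hscale.symm, ← integral_smul]
  congr 1
  funext p
  simp only [rescaledIntegrand, F]
  by_cases hη : p.1 • g + (μ⁻¹ * p.2) • perp g ∈ halfDisk N
  · rw [Set.indicator_of_mem hη, Set.indicator_of_mem hη, inner_perp_smul_add_smul_perp hg,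
      smul_smul, smul_smul]
    congr 1
    field_simp
  · simp [Set.indicator_of_notMem hη]

theorem norm_rescaledIntegrand_le (hg : ‖g‖ = 1) (μ : ℝ) (p : ℝ × ℝ) :
    ‖rescaledIntegrand g N μ p‖ ≤
      (Set.Icc (-1) 1).indicator 1 p.1 * Real.exp (-(1 / 2) * p.2 ^ 2) := by
  set η := p.1 • g + (μ⁻¹ * p.2) • perp g
  by_cases hη : η ∈ halfDisk N
  · have ht : p.1 ∈ Set.Icc (-1) 1 := by
      rw [Set.mem_Icc, ← abs_le, ← inner_smul_add_smul_perp hg p.1 (μ⁻¹ * p.2)]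
      calc |inner ℝ g η| ≤ ‖g‖ * ‖η‖ := abs_real_inner_le_norm g η
        _ ≤ 1 := by rw [hg, one_mul]; exact hη.1
    have hunit : ‖‖η‖⁻¹ • η‖ ≤ 1 := by
      simpa using inv_norm_smul_mem_unitClosedBall η
    rw [rescaledIntegrand, Set.indicator_of_mem hη, Set.indicator_of_mem ht, norm_smul,
      Real.norm_of_nonneg (Real.exp_nonneg _), Pi.one_apply, one_mul]
    exact mul_le_of_le_one_right (Real.exp_nonneg _) hunit
  · rw [rescaledIntegrand, Set.indicator_of_notMem hη, smul_zero, norm_zero]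
    exact mul_nonneg (Set.indicator_nonneg (fun _ _ => zero_le_one) _) (Real.exp_nonneg _)

theorem tendsto_rescaledIntegrand (hg : ‖g‖ = 1) (hgN : 0 < inner ℝ g N) {t : ℝ}
    (ht₀ : t ≠ 0) (ht₁ : t ≠ 1) (u : ℝ) :
    Tendsto (fun μ => rescaledIntegrand g N μ (t, u)) atTop
      (𝓝 (((Set.Ioc 0 1).indicator 1 t * Real.exp (-(1 / 2) * u ^ 2)) • g)) := by
  have hg₀ : g ≠ 0 := norm_ne_zero_iff.1 (hg ▸ one_ne_zero)
  have hφ : ContinuousAt ((halfDisk N).indicator fun η => ‖η‖⁻¹ • η) (t • g) :=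
    (continuousAt_inv_norm_smul (smul_ne_zero ht₀ hg₀)).indicator_of_notMem_frontier
      (smul_notMem_frontier_halfDisk hg hgN ht₀ ht₁)
  have hη : Tendsto (fun μ : ℝ => t • g + (μ⁻¹ * u) • perp g) atTop (𝓝 (t • g)) := by
    simpa using tendsto_const_nhds.add ((tendsto_inv_atTop_zero.mul_const u).smul_const (perp g))
  have := (hφ.tendsto.comp hη).const_smul (Real.exp (-(1 / 2) * u ^ 2))
  rw [indicator_halfDisk_smul hg hgN, smul_smul, mul_comm (Real.exp _)] at this
  exact this

theorem tendsto_transportVec (hg : ‖g‖ = 1) (hgN : 0 < inner ℝ g N) :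
    Tendsto (transportVec g N) atTop (𝓝 (√(2 * π) • g)) := by
  have hlim : Tendsto (fun μ => ∫ p, rescaledIntegrand g N μ p) atTop (𝓝 (√(2 * π) • g)) := by
    rw [← integral_indicator_Ioc_mul_gaussian_smul g]
    refine tendsto_integral_filter_of_dominated_convergence _
      (.of_forall (aestronglyMeasurable_rescaledIntegrand g N))
      (.of_forall fun μ => .of_forall (norm_rescaledIntegrand_le hg μ))
      integrable_indicator_Icc_mul_gaussian ?_
    have hae : ∀ᵐ p : ℝ × ℝ, p.1 ≠ 0 ∧ p.1 ≠ 1 := by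
      rw [Measure.volume_eq_prod]
      exact Measure.quasiMeasurePreserving_fst.ae ((Measure.ae_ne _ 0).and (Measure.ae_ne _ 1))
    filter_upwards [hae] with p ⟨hp₀, hp₁⟩
    exact tendsto_rescaledIntegrand hg hgN hp₀ hp₁ p.2
  refine hlim.congr' ?_
  filter_upwards [eventually_gt_atTop 0] with μ hμ
  exact (transportVec_eq_integral_rescaledIntegrand hg hμ).symm

end UnitGuidance

theorem coherence_transport_guidance_limit_general
    (g N : EuclideanSpace ℝ (Fin 2)) (hg : ‖g‖ = 1)
    (hgN : 0 < (inner ℝ g N : ℝ)) :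
    Tendsto (transportVec g N) atTop (nhds (Real.sqrt (2 * π) • g)) ∧
    Tendsto (fun μ => ‖transportVec g N μ‖⁻¹ • transportVec g N μ) atTop
      (nhds g) := by
  have hv := tendsto_transportVec hg hgN
  refine ⟨hv, ?_⟩
  have hc : 0 < √(2 * π) := by positivity
  have hne : √(2 * π) • g ≠ 0 := smul_ne_zero hc.ne' (norm_ne_zero_iff.1 (hg ▸ one_ne_zero))
  have hlim : ‖√(2 * π) • g‖⁻¹ • √(2 * π) • g = g := by
    rw [norm_smul, hg, mul_one, Real.norm_of_nonneg hc.le, inv_smul_smul₀ hc.ne']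
  simpa only [hlim, Function.comp_def] using (continuousAt_inv_norm_smul hne).tendsto.comp hv

/-- Guidance limit of the coherence transport kernel, generic case: for unit
vectors `g, N` with `⟨g, N⟩ > 0`, the vector `v_μ` converges to `√(2π) g` as
`μ → ∞`; in particular the normalized transport direction `v_μ/|v_μ|`
converges to the guidance vector `g`. -/
theorem coherence_transport_guidance_limit
    (g N : EuclideanSpace ℝ (Fin 2)) (hg : ‖g‖ = 1) (hN : ‖N‖ = 1)
    (hgN : 0 < (inner ℝ g N : ℝ)) :
    Tendsto (transportVec g N) atTop (nhds (Real.sqrt (2 * π) • g)) ∧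
    Tendsto (fun μ => ‖transportVec g N μ‖⁻¹ • transportVec g N μ) atTop
      (nhds g) :=
  coherence_transport_guidance_limit_general g N hg hgN
end
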